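/- In the performance-difference identity, the expected discounted sum of (R_t - J_π) under trajectories from π̃ equals the expected discounted sum of advantages: E_{τ|π̃}[∑_t γ^t (R(s_t,a_t) - J_π)] = (J_{π̃} - J_π)/(1-γ) = E_{τ|π̃}[∑_t γ^t A_π(s_t,a_t)]. -/

import Mathlib

open Finset

/-- t-step iterate of a transition kernel on a finite space. -/
noncomputable def kerPow {T : Type*} [Fintype T] [DecidableEq T] (K : T → T → ℝ) :
    ℕ → T → T → ℝ
  | 0 => fun s s' => if s = s' then 1 else 0
  | (t + 1) => fun s s' => ∑ u, K s u * kerPow K t u s'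

/-- State-action transition kernel induced by the MDP dynamics `P` and the policy `π`. -/
def saKer {S A : Type*} (P : S → A → S → ℝ) (π : S → A → ℝ) :
    S × A → S × A → ℝ :=
  fun p q => P p.1 p.2 q.1 * π q.1 q.2

/-- Expected discounted sum of `f(s_t, a_t)` starting from `(s,a)`, following `π`. -/
noncomputable def Qgen {S A : Type*} [Fintype S] [Fintype A] [DecidableEq S] [DecidableEq A]
    (P : S → A → S → ℝ) (π : S → A → ℝ) (f : S → A → ℝ) (γ : ℝ) (s : S) (a : A) : ℝ :=
  ∑' t : ℕ, γ ^ t * ∑ p : S × A, kerPow (saKer P π) t (s, a) p * f p.1 p.2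

/-- Expected discounted sum `E_{τ|π}[∑ₜ γ^t f(s_t,a_t)]` over trajectories started
from the initial distribution `μ` and following `π`. -/
noncomputable def expDisc {S A : Type*} [Fintype S] [Fintype A] [DecidableEq S] [DecidableEq A]
    (P : S → A → S → ℝ) (π : S → A → ℝ) (μ : S → ℝ) (γ : ℝ) (f : S → A → ℝ) : ℝ :=
  ∑ s, μ s * ∑ a, π s a * Qgen P π f γ s a

/-!
Write `Qᶠ` for the discounted sum of `f` along the state-action chain of a policy. Subtracting a
constant `c` from the reward lowers `Qᶠ` by `c / (1 - γ)`, which gives the first equality. For the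
second, the Bellman equation for `π` rewrites the advantage as `R + γ 𝔼[V(s')] - V`, and along any
chain the discounted sum of `γ 𝔼[V(s_{t+1})] - V(s_t)` telescopes to `-V(s₀)`; averaging over `μ`
and `π̃` leaves `𝔼_{π̃}[∑ γᵗ R] - 𝔼_μ[V] = (J_{π̃} - J_π) / (1 - γ)`.
-/

section Kernel

variable {T : Type*} [Fintype T] [DecidableEq T] {K : T → T → ℝ}

theorem kerPow_succ (t : ℕ) (x y : T) :
    kerPow K (t + 1) x y = ∑ u, K x u * kerPow K t u y :=
  rfl

theorem kerPow_succ_right :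
    ∀ (t : ℕ) (x y : T), kerPow K (t + 1) x y = ∑ u, kerPow K t x u * K u y
  | 0, x, y => by simp [kerPow]
  | t + 1, x, y => by
    calc kerPow K (t + 1 + 1) x y = ∑ u, K x u * ∑ v, kerPow K t u v * K v y := by
          simp only [kerPow_succ (t + 1), kerPow_succ_right t]
      _ = ∑ v, kerPow K (t + 1) x v * K v y := by
          simp only [kerPow_succ, mul_sum, sum_mul, mul_assoc]
          exact sum_comm

theorem kerPow_nonneg (hK : ∀ x y, 0 ≤ K x y) : ∀ t x y, 0 ≤ kerPow K t x y
  | 0, x, y => by unfold kerPow; split <;> norm_num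
  | t + 1, x, y => sum_nonneg fun u _ => mul_nonneg (hK x u) (kerPow_nonneg hK t u y)

theorem sum_kerPow (hK : ∀ x, ∑ y, K x y = 1) : ∀ t x, ∑ y, kerPow K t x y = 1
  | 0, x => by simp [kerPow]
  | t + 1, x => by
    simp only [kerPow]
    rw [sum_comm]
    simp only [← mul_sum, sum_kerPow hK t, mul_one, hK]

noncomputable def kerMean (K : T → T → ℝ) (t : ℕ) (f : T → ℝ) (x : T) : ℝ :=
  ∑ y, kerPow K t x y * f y

noncomputable def discVal (K : T → T → ℝ) (γ : ℝ) (f : T → ℝ) (x : T) : ℝ :=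
  ∑' t, γ ^ t * kerMean K t f x

theorem kerMean_zero (f : T → ℝ) (x : T) : kerMean K 0 f x = f x := by
  simp [kerMean, kerPow]

theorem kerMean_succ (t : ℕ) (f : T → ℝ) (x : T) :
    kerMean K (t + 1) f x = ∑ u, K x u * kerMean K t f u := by
  simp only [kerMean, kerPow_succ, sum_mul, mul_sum, mul_assoc]
  exact sum_comm

theorem kerMean_succ' (t : ℕ) (f : T → ℝ) (x : T) :
    kerMean K (t + 1) f x = kerMean K t (fun y => ∑ z, K y z * f z) x := by
  simp only [kerMean, kerPow_succ_right, sum_mul, mul_sum, mul_assoc]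
  exact sum_comm

theorem kerMean_add (t : ℕ) (f g : T → ℝ) (x : T) :
    kerMean K t (f + g) x = kerMean K t f x + kerMean K t g x := by
  simp [kerMean, mul_add, sum_add_distrib]

theorem kerMean_sub (t : ℕ) (f g : T → ℝ) (x : T) :
    kerMean K t (f - g) x = kerMean K t f x - kerMean K t g x := by
  simp [kerMean, mul_sub, sum_sub_distrib]

theorem kerMean_const (hK : ∀ x, ∑ y, K x y = 1) (t : ℕ) (c : ℝ) (x : T) :
    kerMean K t (fun _ => c) x = c := by
  rw [kerMean, ← sum_mul, sum_kerPow hK, one_mul]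

theorem abs_kerMean_le (hK0 : ∀ x y, 0 ≤ K x y) (hK1 : ∀ x, ∑ y, K x y = 1)
    (t : ℕ) (f : T → ℝ) (x : T) : |kerMean K t f x| ≤ ∑ y, |f y| := by
  have hle : ∀ y, kerPow K t x y ≤ 1 := fun y =>
    (single_le_sum (fun z _ => kerPow_nonneg hK0 t x z) (mem_univ y)).trans_eq
      (sum_kerPow hK1 t x)
  refine (abs_sum_le_sum_abs _ _).trans (sum_le_sum fun y _ => ?_)
  rw [abs_mul, abs_of_nonneg (kerPow_nonneg hK0 t x y)]
  exact mul_le_of_le_one_left (abs_nonneg _) (hle y)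

theorem discVal_const_mul (γ c : ℝ) (f : T → ℝ) (x : T) :
    discVal K γ (fun y => c * f y) x = c * discVal K γ f x := by
  simp only [discVal, kerMean, mul_left_comm _ c, ← mul_sum, tsum_mul_left]

theorem discVal_const (hK : ∀ x, ∑ y, K x y = 1) {γ : ℝ} (hγ0 : 0 ≤ γ) (hγ1 : γ < 1)
    (c : ℝ) (x : T) : discVal K γ (fun _ => c) x = c / (1 - γ) := by
  simp only [discVal, kerMean_const hK]
  rw [tsum_mul_right, tsum_geometric_of_lt_one hγ0 hγ1, inv_mul_eq_div]

section Discounted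

variable (hK0 : ∀ x y, 0 ≤ K x y) (hK1 : ∀ x, ∑ y, K x y = 1) {γ : ℝ} (hγ0 : 0 ≤ γ) (hγ1 : γ < 1)
include hK0 hK1 hγ0 hγ1

theorem summable_discounted_kerMean (f : T → ℝ) (x : T) :
    Summable fun t => γ ^ t * kerMean K t f x := by
  refine Summable.of_norm_bounded ((summable_geometric_of_lt_one hγ0 hγ1).mul_right
    (∑ y, |f y|)) fun t => ?_
  rw [Real.norm_eq_abs, abs_mul, abs_pow, abs_of_nonneg hγ0]
  exact mul_le_mul_of_nonneg_left (abs_kerMean_le hK0 hK1 t f x) (pow_nonneg hγ0 t)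

theorem discVal_add (f g : T → ℝ) (x : T) :
    discVal K γ (f + g) x = discVal K γ f x + discVal K γ g x := by
  simp only [discVal, kerMean_add, mul_add]
  exact (summable_discounted_kerMean hK0 hK1 hγ0 hγ1 f x).tsum_add
    (summable_discounted_kerMean hK0 hK1 hγ0 hγ1 g x)

theorem discVal_sub (f g : T → ℝ) (x : T) :
    discVal K γ (f - g) x = discVal K γ f x - discVal K γ g x := by
  simp only [discVal, kerMean_sub, mul_sub]
  exact (summable_discounted_kerMean hK0 hK1 hγ0 hγ1 f x).tsum_sub
    (summable_discounted_kerMean hK0 hK1 hγ0 hγ1 g x)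

theorem discVal_eq_add_mul_sum (f : T → ℝ) (x : T) :
    discVal K γ f x = f x + γ * ∑ u, K x u * discVal K γ f u := by
  have hsum := summable_discounted_kerMean hK0 hK1 hγ0 hγ1 f
  rw [discVal, (hsum x).tsum_eq_zero_add, pow_zero, one_mul, kerMean_zero]
  congr 1
  calc ∑' t, γ ^ (t + 1) * kerMean K (t + 1) f x
      = ∑' t, ∑ u, γ * (K x u * (γ ^ t * kerMean K t f u)) := tsum_congr fun t => by
        rw [kerMean_succ, mul_sum]
        exact sum_congr rfl fun u _ => by ring
    _ = ∑ u, ∑' t, γ * (K x u * (γ ^ t * kerMean K t f u)) :=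
        Summable.tsum_finsetSum fun u _ => ((hsum u).mul_left _).mul_left _
    _ = γ * ∑ u, K x u * discVal K γ f u := by simp only [tsum_mul_left, discVal, mul_sum]

theorem mul_discVal_step (g : T → ℝ) (x : T) :
    γ * discVal K γ (fun y => ∑ z, K y z * g z) x = discVal K γ g x - g x := by
  rw [discVal, discVal, (summable_discounted_kerMean hK0 hK1 hγ0 hγ1 g x).tsum_eq_zero_add,
    pow_zero, one_mul, kerMean_zero, add_sub_cancel_left, ← tsum_mul_left]
  exact tsum_congr fun t => by rw [kerMean_succ', pow_succ]; ring

theorem discVal_add_telescope (f g : T → ℝ) (x : T) :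
    discVal K γ (fun y => f y + γ * ∑ z, K y z * g z - g y) x = discVal K γ f x - g x := by
  rw [show (fun y => f y + γ * ∑ z, K y z * g z - g y)
      = f + (fun y => γ * ∑ z, K y z * g z) - g from rfl, discVal_sub hK0 hK1 hγ0 hγ1,
    discVal_add hK0 hK1 hγ0 hγ1, discVal_const_mul, mul_discVal_step hK0 hK1 hγ0 hγ1]
  ring

end Discounted

end Kernel

section MDP

variable {S A : Type*} {P : S → A → S → ℝ} {π : S → A → ℝ} {μ : S → ℝ}

theorem saKer_nonneg (hP0 : ∀ s a s', 0 ≤ P s a s') (hπ0 : ∀ s a, 0 ≤ π s a)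
    (p q : S × A) : 0 ≤ saKer P π p q :=
  mul_nonneg (hP0 _ _ _) (hπ0 _ _)

variable [Fintype S] [Fintype A]

theorem sum_saKer_mul (p : S × A) (h : S × A → ℝ) :
    ∑ q, saKer P π p q * h q = ∑ s', P p.1 p.2 s' * ∑ a', π s' a' * h (s', a') := by
  simp only [Fintype.sum_prod_type, saKer, mul_sum, mul_assoc]

theorem sum_saKer_mul_fst (hπ1 : ∀ s, ∑ a, π s a = 1) (p : S × A) (g : S → ℝ) :
    ∑ q, saKer P π p q * g q.1 = ∑ s', P p.1 p.2 s' * g s' := by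
  simp only [sum_saKer_mul, ← sum_mul, hπ1, one_mul]

theorem sum_saKer (hP1 : ∀ s a, ∑ s', P s a s' = 1) (hπ1 : ∀ s, ∑ a, π s a = 1) (p : S × A) :
    ∑ q, saKer P π p q = 1 := by
  simpa [hP1] using sum_saKer_mul_fst (P := P) hπ1 p (fun _ => 1)

variable [DecidableEq S] [DecidableEq A]

theorem Qgen_eq_discVal (f : S → A → ℝ) (γ : ℝ) (s : S) (a : A) :
    Qgen P π f γ s a = discVal (saKer P π) γ (fun p => f p.1 p.2) (s, a) :=
  rfl

variable (hP0 : ∀ s a s', 0 ≤ P s a s') (hP1 : ∀ s a, ∑ s', P s a s' = 1)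
  (hπ0 : ∀ s a, 0 ≤ π s a) (hπ1 : ∀ s, ∑ a, π s a = 1) {γ : ℝ} (hγ0 : 0 ≤ γ) (hγ1 : γ < 1)
include hP0 hP1 hπ0 hπ1 hγ0 hγ1

theorem Qgen_bellman (f : S → A → ℝ) (s : S) (a : A) :
    Qgen P π f γ s a = f s a + γ * ∑ s', P s a s' * ∑ a', π s' a' * Qgen P π f γ s' a' := by
  rw [Qgen_eq_discVal, discVal_eq_add_mul_sum (saKer_nonneg hP0 hπ0) (sum_saKer hP1 hπ1) hγ0 hγ1,
    sum_saKer_mul]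
  rfl

theorem Qgen_sub_const (f : S → A → ℝ) (c : ℝ) (s : S) (a : A) :
    Qgen P π (fun s a => f s a - c) γ s a = Qgen P π f γ s a - c / (1 - γ) := by
  have hK0 := saKer_nonneg hP0 hπ0
  have hK1 := sum_saKer hP1 hπ1
  rw [Qgen_eq_discVal, Qgen_eq_discVal, ← discVal_const hK1 hγ0 hγ1 c (s, a),
    ← discVal_sub hK0 hK1 hγ0 hγ1]
  rfl

theorem expDisc_sub_const (hμ1 : ∑ s, μ s = 1) (f : S → A → ℝ) (c : ℝ) :
    expDisc P π μ γ (fun s a => f s a - c) = expDisc P π μ γ f - c / (1 - γ) := by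
  simp only [expDisc, Qgen_sub_const hP0 hP1 hπ0 hπ1 hγ0 hγ1, mul_sub, sum_sub_distrib,
    ← sum_mul, hπ1, one_mul, hμ1]

theorem Qgen_add_telescope (f : S → A → ℝ) (g : S → ℝ) (s : S) (a : A) :
    Qgen P π (fun s a => f s a + γ * ∑ s', P s a s' * g s' - g s) γ s a
      = Qgen P π f γ s a - g s := by
  rw [Qgen_eq_discVal, Qgen_eq_discVal]
  simp only [← sum_saKer_mul_fst (P := P) hπ1]
  exact discVal_add_telescope (saKer_nonneg hP0 hπ0) (sum_saKer hP1 hπ1) hγ0 hγ1 _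
    (fun p => g p.1) _

theorem expDisc_add_telescope (f : S → A → ℝ) (g : S → ℝ) :
    expDisc P π μ γ (fun s a => f s a + γ * ∑ s', P s a s' * g s' - g s)
      = expDisc P π μ γ f - ∑ s, μ s * g s := by
  simp only [expDisc, Qgen_add_telescope hP0 hP1 hπ0 hπ1 hγ0 hγ1, mul_sub, sum_sub_distrib,
    ← sum_mul, hπ1, one_mul]

end MDP

theorem stmt_12_general {S A : Type*} [Fintype S] [Fintype A] [DecidableEq S] [DecidableEq A]
    (P : S → A → S → ℝ) (π πt : S → A → ℝ) (R : S → A → ℝ) (γ : ℝ) (μ : S → ℝ)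
    (hP0 : ∀ s a s', 0 ≤ P s a s') (hP1 : ∀ s a, ∑ s', P s a s' = 1)
    (hπ0 : ∀ s a, 0 ≤ π s a) (hπ1 : ∀ s, ∑ a, π s a = 1)
    (hπt0 : ∀ s a, 0 ≤ πt s a) (hπt1 : ∀ s, ∑ a, πt s a = 1)
    (hμ1 : ∑ s, μ s = 1)
    (hγ0 : 0 ≤ γ) (hγ1 : γ < 1)
    (Jπ Jπt : ℝ) (Q : S → A → ℝ) (V : S → ℝ) (Adv : S → A → ℝ)
    (hJπ : Jπ = (1 - γ) * expDisc P π μ γ R)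
    (hJπt : Jπt = (1 - γ) * expDisc P πt μ γ R)
    (hQ : ∀ s a, Q s a = Qgen P π R γ s a)
    (hV : ∀ s, V s = ∑ a, π s a * Q s a)
    (hA : ∀ s a, Adv s a = Q s a - V s) :
    expDisc P πt μ γ (fun s a => R s a - Jπ) = (Jπt - Jπ) / (1 - γ)
      ∧ (Jπt - Jπ) / (1 - γ) = expDisc P πt μ γ Adv := by
  have hγ : 1 - γ ≠ 0 := by linarith
  have hV' : ∀ s, V s = ∑ a, π s a * Qgen P π R γ s a := by simp [hV, hQ]
  have hAdv : Adv = fun s a => R s a + γ * ∑ s', P s a s' * V s' - V s := by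
    ext s a
    rw [hA, hQ, Qgen_bellman hP0 hP1 hπ0 hπ1 hγ0 hγ1]
    simp only [hV']
  have hμV : ∑ s, μ s * V s = expDisc P π μ γ R := by simp only [expDisc, hV']
  constructor
  · rw [expDisc_sub_const hP0 hP1 hπt0 hπt1 hγ0 hγ1 hμ1, hJπt]
    field_simp
  · rw [hAdv, expDisc_add_telescope hP0 hP1 hπt0 hπt1 hγ0 hγ1, hμV, hJπt, hJπ]
    field_simp

/-- The expected discounted sum of `R - J_π` under `π̃` equals `(J_{π̃} - J_π)/(1-γ)`,
which equals the expected discounted sum of advantages of `π` under `π̃`. -/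
theorem stmt_12 {S A : Type*} [Fintype S] [Fintype A] [DecidableEq S] [DecidableEq A]
    (P : S → A → S → ℝ) (π πt : S → A → ℝ) (R : S → A → ℝ) (γ : ℝ) (μ : S → ℝ)
    (hP0 : ∀ s a s', 0 ≤ P s a s') (hP1 : ∀ s a, ∑ s', P s a s' = 1)
    (hπ0 : ∀ s a, 0 ≤ π s a) (hπ1 : ∀ s, ∑ a, π s a = 1)
    (hπt0 : ∀ s a, 0 ≤ πt s a) (hπt1 : ∀ s, ∑ a, πt s a = 1)
    (hμ0 : ∀ s, 0 ≤ μ s) (hμ1 : ∑ s, μ s = 1)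
    (hγ0 : 0 ≤ γ) (hγ1 : γ < 1)
    (Jπ Jπt : ℝ) (Q : S → A → ℝ) (V : S → ℝ) (Adv : S → A → ℝ)
    (hJπ : Jπ = (1 - γ) * expDisc P π μ γ R)
    (hJπt : Jπt = (1 - γ) * expDisc P πt μ γ R)
    (hQ : ∀ s a, Q s a = Qgen P π R γ s a)
    (hV : ∀ s, V s = ∑ a, π s a * Q s a)
    (hA : ∀ s a, Adv s a = Q s a - V s) :
    expDisc P πt μ γ (fun s a => R s a - Jπ) = (Jπt - Jπ) / (1 - γ)
      ∧ (Jπt - Jπ) / (1 - γ) = expDisc P πt μ γ Adv :=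
  stmt_12_general P π πt R γ μ hP0 hP1 hπ0 hπ1 hπt0 hπt1 hμ1 hγ0 hγ1 Jπ Jπt Q V Adv hJπ hJπt hQ hV
    hA
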